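/- arXiv:1301.0391 — 3 statements merged into one kernel-verified Lean document; each statement's English description precedes it below -/
import Mathlib

section
/- In any Moufang loop L, the operation C(x,y,z) = (y * x⁻¹) * z satisfies C(C(c,a,b), b, a) = c for all a, b, c ∈ L. -/
/-- A Moufang loop: a quasigroup with identity satisfying the Moufang identity
`z * (x * (z * y)) = ((z * x) * z) * y`. -/
structure MoufangLoop (α : Type*) where
  mul : α → α → α
  one : α
  ldiv : α → α → α
  rdiv : α → α → α
  one_mul : ∀ a, mul one a = a
  mul_one : ∀ a, mul a one = a
  ldiv_mul : ∀ a b, ldiv a (mul a b) = b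
  mul_ldiv : ∀ a b, mul a (ldiv a b) = b
  mul_rdiv : ∀ a b, mul (rdiv a b) b = a
  rdiv_mul : ∀ a b, rdiv (mul a b) b = a
  moufang : ∀ x y z, mul z (mul x (mul z y)) = mul (mul (mul z x) z) y

/-- The (two-sided) inverse in a Moufang loop: `a⁻¹ = a \ 1`. -/
def MoufangLoop.inv {α : Type*} (L : MoufangLoop α) (a : α) : α := L.ldiv a L.one

/-- The ternary operation `C(x,y,z) = (y * x⁻¹) * z`. -/
def MoufangLoop.C {α : Type*} (L : MoufangLoop α) (x y z : α) : α :=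
  L.mul (L.mul y (L.inv x)) z

namespace MoufangLoop
variable {α : Type*} (L : MoufangLoop α)

lemma mul_inv (a : α) : L.mul a (L.inv a) = L.one := L.mul_ldiv a L.one

lemma lip (a y : α) : L.mul (L.inv a) (L.mul a y) = y := by
  have h := L.moufang (L.inv a) y a
  rw [L.mul_inv, L.one_mul] at h
  calc L.mul (L.inv a) (L.mul a y)
      = L.ldiv a (L.mul a (L.mul (L.inv a) (L.mul a y))) := (L.ldiv_mul _ _).symm
    _ = L.ldiv a (L.mul a y) := by rw [h]
    _ = y := L.ldiv_mul a y

lemma inv_mul (a : α) : L.mul (L.inv a) a = L.one := by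
  have := L.lip a L.one
  rwa [L.mul_one] at this

lemma inv_inv (a : α) : L.inv (L.inv a) = a := by
  have := L.lip (L.inv a) a
  rwa [L.inv_mul, L.mul_one] at this

lemma rip (a w : α) : L.mul (L.mul w a) (L.inv a) = w := by
  have h := L.moufang (L.ldiv a w) (L.inv a) a
  rw [L.mul_inv, L.mul_one, L.mul_ldiv] at h
  exact h.symm

lemma inv_mul_rev (x y : α) : L.inv (L.mul x y) = L.mul (L.inv y) (L.inv x) := by
  have hx : L.inv x = L.mul y (L.inv (L.mul x y)) := by
    have h := L.rip (L.mul x y) (L.inv x)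
    calc L.inv x = L.mul (L.mul (L.inv x) (L.mul x y)) (L.inv (L.mul x y)) := h.symm
      _ = L.mul y (L.inv (L.mul x y)) := by rw [L.lip]
  calc L.inv (L.mul x y)
      = L.mul (L.inv y) (L.mul y (L.inv (L.mul x y))) := (L.lip y _).symm
    _ = L.mul (L.inv y) (L.inv x) := by rw [← hx]

end MoufangLoop

theorem moufang_C_inv3 {α : Type*} (L : MoufangLoop α) (a b c : α) :
    L.C (L.C c a b) b a = c := by
  unfold MoufangLoop.C
  have h1 : L.inv (L.mul (L.mul a (L.inv c)) b)
      = L.mul (L.inv b) (L.mul c (L.inv a)) := by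
    rw [L.inv_mul_rev, L.inv_mul_rev, L.inv_inv]
  rw [h1]
  have h2 : L.mul b (L.mul (L.inv b) (L.mul c (L.inv a)))
      = L.mul c (L.inv a) := by
    have := L.lip (L.inv b) (L.mul c (L.inv a))
    rwa [L.inv_inv] at this
  rw [h2]
  have h3 := L.rip (L.inv a) c
  rwa [L.inv_inv] at h3
end

section
/- In any extra loop L, for all b, c, z ∈ L one has (z * (b * c⁻¹)) * z⁻¹ = (z * b) * (c⁻¹ * z⁻¹). -/
/-- An extra loop: a quasigroup with identity satisfying the extra loop identity
`(x * (y * z)) * y = (x * y) * (z * y)`. -/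
structure ExtraLoop (α : Type*) where
  mul : α → α → α
  one : α
  ldiv : α → α → α
  rdiv : α → α → α
  one_mul : ∀ a, mul one a = a
  mul_one : ∀ a, mul a one = a
  ldiv_mul : ∀ a b, ldiv a (mul a b) = b
  mul_ldiv : ∀ a b, mul a (ldiv a b) = b
  mul_rdiv : ∀ a b, mul (rdiv a b) b = a
  rdiv_mul : ∀ a b, rdiv (mul a b) b = a
  extra : ∀ x y z, mul (mul x (mul y z)) y = mul (mul x y) (mul z y)

/-- The (two-sided) inverse in an extra loop: `a⁻¹ = a \ 1`. -/
def ExtraLoop.inv {α : Type*} (L : ExtraLoop α) (a : α) : α := L.ldiv a L.one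

/-- The ternary operation `C(x,y,z) = (x * y⁻¹) * z`. -/
def ExtraLoop.C {α : Type*} (L : ExtraLoop α) (x y z : α) : α :=
  L.mul (L.mul x (L.inv y)) z

section Base
variable {α : Type*}

theorem ax_one_l (L : ExtraLoop α) (vx : α) : L.mul L.one vx = vx := L.one_mul vx
theorem ax_one_r (L : ExtraLoop α) (vx : α) : L.mul vx L.one = vx := L.mul_one vx
theorem ax_inv_r (L : ExtraLoop α) (vx : α) : L.mul vx (L.inv vx) = L.one :=
  L.mul_ldiv vx L.one

/-- auxiliary: `(1/y) * (y*z) = z`. -/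
theorem aux_j (L : ExtraLoop α) (y z : α) :
    L.mul (L.rdiv L.one y) (L.mul y z) = z := by
  have h := L.extra (L.rdiv L.one y) y z
  rw [L.mul_rdiv L.one y, L.one_mul] at h
  have h2 := congrArg (fun t => L.rdiv t y) h
  simpa [L.rdiv_mul] using h2

/-- auxiliary: `1/y = y⁻¹`. -/
theorem aux_j_eq_inv (L : ExtraLoop α) (y : α) : L.rdiv L.one y = L.inv y := by
  have h := aux_j L y (L.inv y)
  rwa [ax_inv_r, L.mul_one] at h

theorem ax_inv_l (L : ExtraLoop α) (vx : α) : L.mul (L.inv vx) vx = L.one := by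
  rw [← aux_j_eq_inv]; exact L.mul_rdiv L.one vx

theorem ax_lipl (L : ExtraLoop α) (vx vy : α) : L.mul (L.inv vx) (L.mul vx vy) = vy := by
  rw [← aux_j_eq_inv]; exact aux_j L vx vy

theorem ax_invinv (L : ExtraLoop α) (vx : α) : L.inv (L.inv vx) = vx := by
  have h := L.rdiv_mul vx (L.inv vx)
  rw [ax_inv_r] at h
  rw [← aux_j_eq_inv]; exact h

theorem ax_lipr (L : ExtraLoop α) (vx vy : α) : L.mul vx (L.mul (L.inv vx) vy) = vy := by
  have h := ax_lipl L (L.inv vx) vy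
  rwa [ax_invinv] at h

theorem ax_inv_one (L : ExtraLoop α) : L.inv L.one = L.one := by
  have h := L.ldiv_mul L.one L.one
  rw [L.one_mul] at h
  exact h

theorem ax_E (L : ExtraLoop α) (vx vy vz : α) :
    L.mul (L.mul vx (L.mul vy vz)) vy = L.mul (L.mul vx vy) (L.mul vz vy) :=
  L.extra vx vy vz

end Base
theorem eq2 {α : Type*} (L : ExtraLoop α) (vx : α) :
    (L.mul L.one vx) = vx :=
  (ax_one_l L vx)

theorem eq3 {α : Type*} (L : ExtraLoop α) (vx : α) :
    (L.mul vx L.one) = vx :=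
  (ax_one_r L vx)

theorem eq4 {α : Type*} (L : ExtraLoop α) (vx : α) :
    (L.inv (L.inv vx)) = vx :=
  (ax_invinv L vx)

theorem eq6 {α : Type*} (L : ExtraLoop α) (vx : α) :
    (L.mul (L.inv vx) vx) = L.one :=
  (ax_inv_l L vx)

theorem eq7 {α : Type*} (L : ExtraLoop α) (vx vy : α) :
    (L.mul (L.inv vx) (L.mul vx vy)) = vy :=
  (ax_lipl L vx vy)

theorem eq8 {α : Type*} (L : ExtraLoop α) (vx vy : α) :
    (L.mul vx (L.mul (L.inv vx) vy)) = vy :=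
  (ax_lipr L vx vy)

theorem eq9 {α : Type*} (L : ExtraLoop α) (vx vy vz : α) :
    (L.mul (L.mul vx (L.mul vy vz)) vy) = (L.mul (L.mul vx vy) (L.mul vz vy)) :=
  (ax_E L vx vy vz)

theorem eq10 {α : Type*} (L : ExtraLoop α) (vyL vzL : α) :
    (L.mul (L.mul vyL vzL) vyL) = (L.mul vyL (L.mul vzL vyL)) :=
  (Eq.symm (Eq.trans (Eq.symm (congrArg (fun vH => (L.mul vH (L.mul vzL vyL))) (eq2 L vyL))) (Eq.trans (Eq.symm (eq9 L L.one vyL vzL)) (congrArg (fun vH => (L.mul vH vyL)) (eq2 L (L.mul vyL vzL))))))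

theorem eq12 {α : Type*} (L : ExtraLoop α) (vxR vyR : α) :
    (L.mul vxR (L.mul (L.mul (L.inv vxR) vyR) vxR)) = (L.mul vyR vxR) :=
  (Eq.trans (Eq.symm (eq10 L vxR (L.mul (L.inv vxR) vyR))) (congrArg (fun vH => (L.mul vH vxR)) (eq8 L vxR vyR)))

theorem eq13 {α : Type*} (L : ExtraLoop α) (vxRR vyRR : α) :
    (L.mul (L.mul (L.inv vxRR) vyRR) vxRR) = (L.mul (L.inv vxRR) (L.mul vyRR vxRR)) :=
  (Eq.trans (Eq.symm (eq7 L vxRR (L.mul (L.mul (L.inv vxRR) vyRR) vxRR))) (congrArg (fun vH => (L.mul (L.inv vxRR) vH)) (eq12 L vxRR vyRR)))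

theorem eq14 {α : Type*} (L : ExtraLoop α) (vyL vzL : α) :
    (L.mul (L.mul (L.inv (L.mul vyL vzL)) vyL) (L.mul vzL vyL)) = vyL :=
  (Eq.trans (Eq.trans (Eq.symm (eq9 L (L.inv (L.mul vyL vzL)) vyL vzL)) (congrArg (fun vH => (L.mul vH vyL)) (eq6 L (L.mul vyL vzL)))) (eq2 L vyL))

theorem eq15 {α : Type*} (L : ExtraLoop α) (vyLR vzLR : α) :
    (L.mul (L.inv (L.mul (L.inv (L.mul vyLR vzLR)) vyLR)) vyLR) = (L.mul vzLR vyLR) :=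
  (Eq.symm (Eq.trans (Eq.symm (eq7 L (L.mul (L.inv (L.mul vyLR vzLR)) vyLR) (L.mul vzLR vyLR))) (congrArg (fun vH => (L.mul (L.inv (L.mul (L.inv (L.mul vyLR vzLR)) vyLR)) vH)) (eq14 L vyLR vzLR))))

theorem eq16 {α : Type*} (L : ExtraLoop α) (vxR vyR : α) :
    (L.mul (L.mul (L.inv vyR) vxR) (L.mul (L.inv vxR) (L.mul vyR vxR))) = vxR :=
  (Eq.symm (Eq.trans (Eq.trans (Eq.symm (eq14 L vxR (L.mul (L.inv vxR) vyR))) (congrArg (fun vH => (L.mul (L.mul (L.inv vH) vxR) (L.mul (L.mul (L.inv vxR) vyR) vxR))) (eq8 L vxR vyR))) (congrArg (fun vH => (L.mul (L.mul (L.inv vyR) vxR) vH)) (eq13 L vxR vyR))))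

theorem eq19 {α : Type*} (L : ExtraLoop α) (vxR vxRL : α) :
    (L.mul (L.mul vxR vxRL) (L.mul (L.inv vxRL) (L.mul (L.inv vxR) vxRL))) = vxRL :=
  (Eq.symm (Eq.trans (Eq.symm (eq16 L vxRL (L.inv vxR))) (congrArg (fun vH => (L.mul (L.mul vH vxRL) (L.mul (L.inv vxRL) (L.mul (L.inv vxR) vxRL)))) (eq4 L vxR))))

theorem eq21 {α : Type*} (L : ExtraLoop α) (vxR vyR : α) :
    (L.mul (L.inv vxR) (L.mul (L.mul vxR vyR) (L.inv vxR))) = (L.mul vyR (L.inv vxR)) :=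
  (Eq.trans (Eq.symm (eq10 L (L.inv vxR) (L.mul vxR vyR))) (congrArg (fun vH => (L.mul vH (L.inv vxR))) (eq7 L vxR vyR)))

theorem eq22 {α : Type*} (L : ExtraLoop α) (vxRR vyRR : α) :
    (L.mul (L.mul vxRR vyRR) (L.inv vxRR)) = (L.mul vxRR (L.mul vyRR (L.inv vxRR))) :=
  (Eq.trans (Eq.symm (eq8 L vxRR (L.mul (L.mul vxRR vyRR) (L.inv vxRR)))) (congrArg (fun vH => (L.mul vxRR vH)) (eq21 L vxRR vyRR)))

theorem eq30 {α : Type*} (L : ExtraLoop α) (vxRLR vxRR : α) :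
    (L.mul (L.inv vxRLR) (L.mul (L.inv vxRR) vxRLR)) = (L.mul (L.inv (L.mul vxRR vxRLR)) vxRLR) :=
  (Eq.trans (Eq.symm (eq7 L (L.mul vxRR vxRLR) (L.mul (L.inv vxRLR) (L.mul (L.inv vxRR) vxRLR)))) (congrArg (fun vH => (L.mul (L.inv (L.mul vxRR vxRLR)) vH)) (eq19 L vxRR vxRLR)))

theorem eq31 {α : Type*} (L : ExtraLoop α) (vxRLRR vxRRR : α) :
    (L.mul vxRLRR (L.mul (L.inv (L.mul vxRRR vxRLRR)) vxRLRR)) = (L.mul (L.inv vxRRR) vxRLRR) :=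
  (Eq.symm (Eq.trans (Eq.symm (eq8 L vxRLRR (L.mul (L.inv vxRRR) vxRLRR))) (congrArg (fun vH => (L.mul vxRLRR vH)) (eq30 L vxRLRR vxRRR))))

theorem eq49 {α : Type*} (L : ExtraLoop α) (vxL vxR vyR : α) :
    (L.mul (L.mul vxL vxR) (L.mul (L.inv vxR) (L.mul vyR vxR))) = (L.mul (L.mul vxL vyR) vxR) :=
  (Eq.trans (Eq.symm (congrArg (fun vH => (L.mul (L.mul vxL vxR) vH)) (eq13 L vxR vyR))) (Eq.trans (Eq.symm (eq9 L vxL vxR (L.mul (L.inv vxR) vyR))) (congrArg (fun vH => (L.mul (L.mul vxL vH) vxR)) (eq8 L vxR vyR))))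

theorem eq74 {α : Type*} (L : ExtraLoop α) (vyLRR vzLRR : α) :
    (L.mul (L.mul (L.mul (L.inv (L.mul vyLRR vzLRR)) vyLRR) vzLRR) vyLRR) = vyLRR :=
  (Eq.symm (Eq.trans (Eq.trans (Eq.symm (eq19 L (L.mul (L.inv (L.mul vyLRR vzLRR)) vyLRR) vyLRR)) (congrArg (fun vH => (L.mul (L.mul (L.mul (L.inv (L.mul vyLRR vzLRR)) vyLRR) vyLRR) (L.mul (L.inv vyLRR) vH))) (eq15 L vyLRR vzLRR))) (eq49 L (L.mul (L.inv (L.mul vyLRR vzLRR)) vyLRR) vyLRR vzLRR)))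

theorem eq76 {α : Type*} (L : ExtraLoop α) (vxR vyR : α) :
    (L.mul (L.mul (L.mul (L.inv vyR) vxR) (L.mul (L.inv vxR) vyR)) vxR) = vxR :=
  (Eq.symm (Eq.trans (Eq.symm (eq74 L vxR (L.mul (L.inv vxR) vyR))) (congrArg (fun vH => (L.mul (L.mul (L.mul (L.inv vH) vxR) (L.mul (L.inv vxR) vyR)) vxR)) (eq8 L vxR vyR))))

theorem eq77 {α : Type*} (L : ExtraLoop α) (vxRR vyRR : α) :
    (L.mul (L.mul (L.mul (L.inv (L.mul vyRR vxRR)) vyRR) vxRR) vxRR) = vxRR :=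
  (Eq.symm (Eq.trans (Eq.symm (eq76 L vxRR (L.mul vyRR vxRR))) (congrArg (fun vH => (L.mul vH vxRR)) (eq49 L (L.inv (L.mul vyRR vxRR)) vxRR vyRR))))

theorem eq79 {α : Type*} (L : ExtraLoop α) (vxRRR vyRRR : α) :
    (L.mul (L.inv (L.mul (L.mul (L.inv (L.mul vyRRR vxRRR)) vyRRR) vxRRR)) vxRRR) = vxRRR :=
  (Eq.symm (Eq.trans (Eq.symm (eq7 L (L.mul (L.mul (L.inv (L.mul vyRRR vxRRR)) vyRRR) vxRRR) vxRRR)) (congrArg (fun vH => (L.mul (L.inv (L.mul (L.mul (L.inv (L.mul vyRRR vxRRR)) vyRRR) vxRRR)) vH)) (eq77 L vxRRR vyRRR))))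

theorem eq80 {α : Type*} (L : ExtraLoop α) (vxRRRR vyRRRR : α) :
    (L.mul (L.inv (L.mul (L.inv (L.mul vyRRRR vxRRRR)) vyRRRR)) vxRRRR) = (L.mul vxRRRR vxRRRR) :=
  (Eq.trans (Eq.symm (eq31 L vxRRRR (L.mul (L.inv (L.mul vyRRRR vxRRRR)) vyRRRR))) (congrArg (fun vH => (L.mul vxRRRR vH)) (eq79 L vxRRRR vyRRRR)))

theorem eq118 {α : Type*} (L : ExtraLoop α) (vxLR vxRR vyRR : α) :
    (L.mul (L.inv (L.mul vxLR vxRR)) (L.mul (L.mul vxLR vyRR) vxRR)) = (L.mul (L.inv vxRR) (L.mul vyRR vxRR)) :=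
  (Eq.symm (Eq.trans (Eq.symm (eq7 L (L.mul vxLR vxRR) (L.mul (L.inv vxRR) (L.mul vyRR vxRR)))) (congrArg (fun vH => (L.mul (L.inv (L.mul vxLR vxRR)) vH)) (eq49 L vxLR vxRR vyRR))))

theorem eq136 {α : Type*} (L : ExtraLoop α) (vxRRRRR vyRRRRR : α) :
    (L.mul vxRRRRR (L.mul (L.mul (L.inv (L.mul vyRRRRR vxRRRRR)) vyRRRRR) vxRRRRR)) = vxRRRRR :=
  (Eq.symm (Eq.trans (Eq.trans (Eq.symm (eq16 L vxRRRRR (L.mul (L.inv (L.mul vyRRRRR vxRRRRR)) vyRRRRR))) (congrArg (fun vH => (L.mul vH (L.mul (L.inv vxRRRRR) (L.mul (L.mul (L.inv (L.mul vyRRRRR vxRRRRR)) vyRRRRR) vxRRRRR)))) (eq80 L vxRRRRR vyRRRRR))) (Eq.trans (eq49 L vxRRRRR vxRRRRR (L.mul (L.inv (L.mul vyRRRRR vxRRRRR)) vyRRRRR)) (eq10 L vxRRRRR (L.mul (L.inv (L.mul vyRRRRR vxRRRRR)) vyRRRRR)))))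

theorem eq137 {α : Type*} (L : ExtraLoop α) (vxRRRRRR vyRRRRRR : α) :
    (L.mul (L.mul (L.inv (L.mul vyRRRRRR vxRRRRRR)) vyRRRRRR) vxRRRRRR) = L.one :=
  (Eq.trans (Eq.trans (Eq.symm (eq7 L vxRRRRRR (L.mul (L.mul (L.inv (L.mul vyRRRRRR vxRRRRRR)) vyRRRRRR) vxRRRRRR))) (congrArg (fun vH => (L.mul (L.inv vxRRRRRR) vH)) (eq136 L vxRRRRRR vyRRRRRR))) (eq6 L vxRRRRRR))

theorem eq139 {α : Type*} (L : ExtraLoop α) (vxRRRRRRR vyRRRRRRR : α) :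
    (L.inv (L.mul (L.inv (L.mul vyRRRRRRR vxRRRRRRR)) vyRRRRRRR)) = vxRRRRRRR :=
  (Eq.symm (Eq.trans (Eq.trans (Eq.symm (eq7 L (L.mul (L.inv (L.mul vyRRRRRRR vxRRRRRRR)) vyRRRRRRR) vxRRRRRRR)) (congrArg (fun vH => (L.mul (L.inv (L.mul (L.inv (L.mul vyRRRRRRR vxRRRRRRR)) vyRRRRRRR)) vH)) (eq137 L vxRRRRRRR vyRRRRRRR))) (eq3 L (L.inv (L.mul (L.inv (L.mul vyRRRRRRR vxRRRRRRR)) vyRRRRRRR)))))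

theorem eq140 {α : Type*} (L : ExtraLoop α) (vxRRRRRRRR vyRRRRRRRR : α) :
    (L.mul (L.inv (L.mul vyRRRRRRRR vxRRRRRRRR)) vyRRRRRRRR) = (L.inv vxRRRRRRRR) :=
  (Eq.trans (Eq.symm (eq4 L (L.mul (L.inv (L.mul vyRRRRRRRR vxRRRRRRRR)) vyRRRRRRRR))) (congrArg (fun vH => (L.inv vH)) (eq139 L vxRRRRRRRR vyRRRRRRRR)))

theorem eq141 {α : Type*} (L : ExtraLoop α) (vxRRRRRRRRR vyRRRRRRRRR : α) :
    (L.mul (L.mul vyRRRRRRRRR vxRRRRRRRRR) (L.inv vxRRRRRRRRR)) = vyRRRRRRRRR :=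
  (Eq.symm (Eq.trans (Eq.symm (eq8 L (L.mul vyRRRRRRRRR vxRRRRRRRRR) vyRRRRRRRRR)) (congrArg (fun vH => (L.mul (L.mul vyRRRRRRRRR vxRRRRRRRRR) vH)) (eq140 L vxRRRRRRRRR vyRRRRRRRRR))))

theorem eq146 {α : Type*} (L : ExtraLoop α) (vxR vyR : α) :
    (L.mul (L.inv vyR) (L.inv vxR)) = (L.inv (L.mul vxR vyR)) :=
  (Eq.symm (Eq.trans (Eq.symm (eq140 L (L.mul vxR vyR) (L.inv vxR))) (congrArg (fun vH => (L.mul (L.inv vH) (L.inv vxR))) (eq7 L vxR vyR))))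

theorem eq233 {α : Type*} (L : ExtraLoop α) (vxRRRRRRRR vyRRL vyRRRRRRRR : α) :
    (L.mul vxRRRRRRRR (L.mul (L.mul (L.inv (L.mul vyRRRRRRRR vxRRRRRRRR)) vyRRL) vyRRRRRRRR)) = (L.mul (L.inv vyRRRRRRRR) (L.mul vyRRL vyRRRRRRRR)) :=
  (Eq.symm (Eq.trans (Eq.symm (eq118 L (L.inv (L.mul vyRRRRRRRR vxRRRRRRRR)) vyRRRRRRRR vyRRL)) (congrArg (fun vH => (L.mul vH (L.mul (L.mul (L.inv (L.mul vyRRRRRRRR vxRRRRRRRR)) vyRRL) vyRRRRRRRR))) (eq139 L vxRRRRRRRR vyRRRRRRRR))))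

theorem eq234 {α : Type*} (L : ExtraLoop α) (vxRRRRRRRRL vyR vyRRRRRRRRL : α) :
    (L.mul (L.inv vyRRRRRRRRL) (L.mul (L.mul (L.mul vyRRRRRRRRL vxRRRRRRRRL) vyR) vyRRRRRRRRL)) = (L.mul vxRRRRRRRRL (L.mul vyR vyRRRRRRRRL)) :=
  (Eq.trans (Eq.symm (eq233 L vxRRRRRRRRL (L.mul (L.mul vyRRRRRRRRL vxRRRRRRRRL) vyR) vyRRRRRRRRL)) (congrArg (fun vH => (L.mul vxRRRRRRRRL (L.mul vH vyRRRRRRRRL))) (eq7 L (L.mul vyRRRRRRRRL vxRRRRRRRRL) vyR)))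

theorem eq235 {α : Type*} (L : ExtraLoop α) (vxRRRRRRRRLR vyRR vyRRRRRRRRLR : α) :
    (L.mul (L.mul (L.mul vyRRRRRRRRLR vxRRRRRRRRLR) vyRR) vyRRRRRRRRLR) = (L.mul vyRRRRRRRRLR (L.mul vxRRRRRRRRLR (L.mul vyRR vyRRRRRRRRLR))) :=
  (Eq.trans (Eq.symm (eq8 L vyRRRRRRRRLR (L.mul (L.mul (L.mul vyRRRRRRRRLR vxRRRRRRRRLR) vyRR) vyRRRRRRRRLR))) (congrArg (fun vH => (L.mul vyRRRRRRRRLR vH)) (eq234 L vxRRRRRRRRLR vyRR vyRRRRRRRRLR)))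

theorem eq239 {α : Type*} (L : ExtraLoop α) (vxRRRRRRRRLRR vyRRR vyRRRRRRRRLRR : α) :
    (L.mul vyRRRRRRRRLRR (L.mul (L.mul vxRRRRRRRRLRR (L.mul vyRRR vyRRRRRRRRLRR)) (L.inv vyRRRRRRRRLRR))) = (L.mul (L.mul vyRRRRRRRRLRR vxRRRRRRRRLRR) vyRRR) :=
  (Eq.symm (Eq.trans (Eq.trans (Eq.symm (eq141 L vyRRRRRRRRLRR (L.mul (L.mul vyRRRRRRRRLRR vxRRRRRRRRLRR) vyRRR))) (congrArg (fun vH => (L.mul vH (L.inv vyRRRRRRRRLRR))) (eq235 L vxRRRRRRRRLRR vyRRR vyRRRRRRRRLRR))) (eq22 L vyRRRRRRRRLRR (L.mul vxRRRRRRRRLRR (L.mul vyRRR vyRRRRRRRRLRR)))))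

theorem eq531 {α : Type*} (L : ExtraLoop α) (vxRRRRRRRRLRRL vxRRRRRRRRR vyRRRRRRRRR : α) :
    (L.mul vyRRRRRRRRR (L.mul (L.mul vxRRRRRRRRLRRL (L.inv vxRRRRRRRRR)) (L.inv vyRRRRRRRRR))) = (L.mul (L.mul vyRRRRRRRRR vxRRRRRRRRLRRL) (L.inv (L.mul vyRRRRRRRRR vxRRRRRRRRR))) :=
  (Eq.symm (Eq.trans (Eq.symm (eq239 L vxRRRRRRRRLRRL (L.inv (L.mul vyRRRRRRRRR vxRRRRRRRRR)) vyRRRRRRRRR)) (congrArg (fun vH => (L.mul vyRRRRRRRRR (L.mul (L.mul vxRRRRRRRRLRRL vH) (L.inv vyRRRRRRRRR)))) (eq140 L vxRRRRRRRRR vyRRRRRRRRR))))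

theorem extra_conj_identity {α : Type*} (L : ExtraLoop α) (b c z : α) :
    L.mul (L.mul z (L.mul b (L.inv c))) (L.inv z) =
      L.mul (L.mul z b) (L.mul (L.inv c) (L.inv z)) :=
  (Eq.trans (Eq.trans (eq22 L z (L.mul b (L.inv c))) (eq531 L b c z)) (Eq.symm (congrArg (fun vH => (L.mul (L.mul z b) vH)) (eq146 L z c))))
end

section
/- In any extra loop L, the operation C(x,y,z) = (x * y⁻¹) * z satisfies the ternary distributivity C(C(a,b,c), c, d) = C(C(a, b, C(b,c,d)), C(b,c,d), d) for all a, b, c, d ∈ L. -/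
namespace ExtraLoop

variable {α : Type*} (L : ExtraLoop α)

lemma mul_inv (a : α) : L.mul a (L.inv a) = L.one := L.mul_ldiv a L.one

lemma inv_mul (y : α) : L.mul (L.inv y) y = L.one := by
  have h := L.extra L.one y (L.inv y)
  rw [L.mul_inv, L.mul_one, L.one_mul] at h
  -- h : y = (y) * (y⁻¹ * y)
  have := L.ldiv_mul y (L.mul (L.inv y) y)
  rw [← h] at this
  have h1 : L.ldiv y y = L.one := by
    have := L.ldiv_mul y L.one
    rwa [L.mul_one] at this
  rw [h1] at this
  exact this.symm

lemma lip (y z : α) : L.mul (L.inv y) (L.mul y z) = z := by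
  have h := L.extra (L.inv y) y z
  rw [L.inv_mul, L.one_mul] at h
  -- h : (y⁻¹ * (y*z)) * y = (z * y)
  have := congrArg (fun t => L.rdiv t y) h
  simpa [L.rdiv_mul] using this

lemma inv_inv (y : α) : L.inv (L.inv y) = y := by
  have := L.ldiv_mul (L.inv y) y
  rw [L.inv_mul] at this
  exact this

lemma mul_inv_mul (u z : α) : L.mul u (L.mul (L.inv u) z) = z := by
  have := L.lip (L.inv u) z
  rwa [L.inv_inv] at this

lemma ldiv_eq (u z : α) : L.ldiv u z = L.mul (L.inv u) z := by
  conv_lhs => rw [← L.mul_inv_mul u z]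
  rw [L.ldiv_mul]

/-- antiautomorphic inverse property -/
lemma aaip (u y : α) : L.inv (L.mul u y) = L.mul (L.inv y) (L.inv u) := by
  have h := L.extra (L.inv (L.inv u)) y (L.mul (L.inv y) (L.inv u))
  rw [L.inv_inv, L.mul_inv_mul, L.mul_inv, L.one_mul] at h
  -- h : y = (u*y) * ((y⁻¹ u⁻¹) * y)
  have h2 := L.ldiv_mul (L.mul u y) (L.mul (L.mul (L.inv y) (L.inv u)) y)
  rw [← h, L.ldiv_eq] at h2
  -- h2 : (u*y)⁻¹ * y = (y⁻¹ u⁻¹) * y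
  have h3 := congrArg (fun t => L.rdiv t y) h2
  simpa [L.rdiv_mul] using h3

/-- right inverse property -/
lemma rip (x y : α) : L.mul (L.mul x y) (L.inv y) = x := by
  have h : L.inv (L.mul (L.mul x y) (L.inv y)) = L.inv x := by
    rw [L.aaip, L.inv_inv, L.aaip, L.mul_inv_mul]
  have := congrArg L.inv h
  rwa [L.inv_inv, L.inv_inv] at this

end ExtraLoop

theorem extra_C_distrib1 {α : Type*} (L : ExtraLoop α) (a b c d : α) :
    L.C (L.C a b c) c d = L.C (L.C a b (L.C b c d)) (L.C b c d) d := by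
  simp only [ExtraLoop.C]
  rw [L.rip, L.rip]
end
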